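/- Let V be a finite-dimensional real vector space and ρ an expansive endomorphism action of a semigroup Γ on V. Then there exists a finitely generated subsemigroup Γ₀ ⊆ Γ whose restricted action on V is expansive; equivalently, if every nonzero v ∈ V has unbounded Γ-orbit, then there is a finitely generated subsemigroup Γ₀ such that every nonzero v ∈ V has unbounded Γ₀-orbit. -/

import Mathlib

/-!
By linearity, expansiveness means exactly that every nonzero orbit is unbounded. Then every unit
vector `v` has some `γ` with `‖ρ γ v‖ > 2`; this is an open condition, so compactness of the unit
sphere selects finitely many `γ` that cover it, and by homogeneity one of them doubles the norm of
any nonzero vector. Iterating inside the submonoid they generate makes every nonzero orbit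
unbounded again.
-/

open Topology

section Expansive

variable {ι V W : Type*} [NormedAddCommGroup V] [NormedSpace ℝ V]
  [NormedAddCommGroup W] [NormedSpace ℝ W]

def IsExpansive (f : ι → V →L[ℝ] W) : Prop :=
  ∃ U ∈ 𝓝 (0 : W), ∀ v : V, (∀ i, f i v ∈ U) → v = 0

theorem isExpansive_iff_forall_ne_zero_not_bddAbove {f : ι → V →L[ℝ] W} :
    IsExpansive f ↔ ∀ v : V, v ≠ 0 → ¬BddAbove (Set.range fun i => ‖f i v‖) := by
  constructor
  · rintro ⟨U, hU, hf⟩ v hv ⟨C, hC⟩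
    obtain ⟨ε, hε, hball⟩ := Metric.mem_nhds_iff.mp hU
    set a : ℝ := ε / (|C| + 1)
    have ha : 0 < a := by positivity
    have hbound : ∀ i, ‖f i (a • v)‖ < ε := fun i => calc
      ‖f i (a • v)‖ = a * ‖f i v‖ := by rw [map_smul, norm_smul, Real.norm_of_nonneg ha.le]
      _ ≤ a * C := by gcongr; exact hC ⟨i, rfl⟩
      _ < a * (|C| + 1) := by gcongr; linarith [le_abs_self C]
      _ = ε := div_mul_cancel₀ ε (by positivity)
    have := hf (a • v) fun i => hball (mem_ball_zero_iff.mpr (hbound i))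
    exact hv ((smul_eq_zero_iff_right ha.ne').mp this)
  · intro hf
    refine ⟨Metric.ball 0 1, Metric.ball_mem_nhds 0 one_pos, fun v hv => ?_⟩
    by_contra hv₀
    refine hf v hv₀ ⟨1, ?_⟩
    rintro _ ⟨i, rfl⟩
    exact (mem_ball_zero_iff.mp (hv i)).le

theorem mul_norm_lt_norm_apply_smul_iff (g : V →L[ℝ] W) (c : ℝ) {a : ℝ} (ha : a ≠ 0) (v : V) :
    c * ‖a • v‖ < ‖g (a • v)‖ ↔ c * ‖v‖ < ‖g v‖ := by
  rw [map_smul, norm_smul, norm_smul, mul_left_comm]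
  exact mul_lt_mul_iff_right₀ (norm_pos_iff.mpr ha)

theorem exists_finset_forall_ne_zero_exists_mem_mul_norm_lt [FiniteDimensional ℝ V]
    {f : ι → V →L[ℝ] W} {c : ℝ} (hf : ∀ v : V, v ≠ 0 → ∃ i, c * ‖v‖ < ‖f i v‖) :
    ∃ s : Finset ι, ∀ v : V, v ≠ 0 → ∃ i ∈ s, c * ‖v‖ < ‖f i v‖ := by
  have hopen (i : ι) : IsOpen {w : V | c * ‖w‖ < ‖f i w‖} :=
    isOpen_lt (continuous_const.mul continuous_norm) (f i).continuous.norm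
  have hcover : Metric.sphere (0 : V) 1 ⊆ ⋃ i, {w : V | c * ‖w‖ < ‖f i w‖} := fun w hw =>
    Set.mem_iUnion.mpr (hf w (ne_zero_of_mem_unit_sphere ⟨w, hw⟩))
  obtain ⟨s, hs⟩ := (isCompact_sphere (0 : V) 1).elim_finite_subcover _ hopen hcover
  refine ⟨s, fun v hv => ?_⟩
  have hnorm : ‖v‖ ≠ 0 := norm_ne_zero_iff.mpr hv
  have hunit : ‖v‖⁻¹ • v ∈ Metric.sphere (0 : V) 1 := by
    rw [mem_sphere_zero_iff_norm, norm_smul, norm_inv, norm_norm, inv_mul_cancel₀ hnorm]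
  obtain ⟨i, hi, hiv⟩ := Set.mem_iUnion₂.mp (hs hunit)
  exact ⟨i, hi, (mul_norm_lt_norm_apply_smul_iff (f i) c (inv_ne_zero hnorm) v).mp hiv⟩

end Expansive

section Submonoid

variable {Γ V : Type*} [Monoid Γ] [NormedAddCommGroup V] [NormedSpace ℝ V]

theorem exists_mem_closure_pow_mul_norm_le (ρ : Γ →* (V →L[ℝ] V)) {S : Set Γ} {c : ℝ}
    (hc : 0 ≤ c) (hS : ∀ v : V, v ≠ 0 → ∃ γ ∈ S, c * ‖v‖ < ‖ρ γ v‖) (n : ℕ) {v : V}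
    (hv : v ≠ 0) : ∃ γ ∈ Submonoid.closure S, c ^ n * ‖v‖ ≤ ‖ρ γ v‖ := by
  induction n generalizing v with
  | zero => exact ⟨1, Submonoid.one_mem _, by simp⟩
  | succ n ih =>
    obtain ⟨δ, hδS, hδ⟩ := hS v hv
    have hδv : ρ δ v ≠ 0 := norm_pos_iff.mp ((by positivity : 0 ≤ c * ‖v‖).trans_lt hδ)
    obtain ⟨γ, hγ, hγv⟩ := ih hδv
    refine ⟨γ * δ, mul_mem hγ (Submonoid.subset_closure hδS), ?_⟩
    calc c ^ (n + 1) * ‖v‖ = c ^ n * (c * ‖v‖) := by ring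
      _ ≤ c ^ n * ‖ρ δ v‖ := by gcongr
      _ ≤ ‖ρ (γ * δ) v‖ := by rw [map_mul]; exact hγv

theorem isExpansive_closure_of_forall_ne_zero_exists_mem_mul_norm_lt (ρ : Γ →* (V →L[ℝ] V))
    {S : Set Γ} {c : ℝ} (hc : 1 < c) (hS : ∀ v : V, v ≠ 0 → ∃ γ ∈ S, c * ‖v‖ < ‖ρ γ v‖) :
    IsExpansive fun γ : Submonoid.closure S => ρ γ := by
  refine isExpansive_iff_forall_ne_zero_not_bddAbove.mpr fun v hv => ?_
  refine not_bddAbove_iff.mpr fun C => ?_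
  obtain ⟨n, hn⟩ := pow_unbounded_of_one_lt (C / ‖v‖) hc
  obtain ⟨γ, hγ, hγv⟩ := exists_mem_closure_pow_mul_norm_le ρ (zero_le_one.trans hc.le) hS n hv
  refine ⟨_, ⟨⟨γ, hγ⟩, rfl⟩, ?_⟩
  calc C < c ^ n * ‖v‖ := (div_lt_iff₀ (norm_pos_iff.mpr hv)).mp hn
    _ ≤ ‖ρ γ v‖ := hγv

end Submonoid

/-- If `ρ` is an expansive endomorphism action of a semigroup (with
identity) `Γ` on a finite-dimensional real vector space `V`, then there is a finitely
generated subsemigroup `Γ₀ ⊆ Γ` whose restricted action is still expansive. -/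
theorem exists_finitely_generated_subsemigroup_expansive
    {V Γ : Type*} [NormedAddCommGroup V] [NormedSpace ℝ V]
    [FiniteDimensional ℝ V] [Monoid Γ] (ρ : Γ →* (V →L[ℝ] V))
    (hexp : ∃ U ∈ nhds (0 : V), ∀ v : V, (∀ γ : Γ, ρ γ v ∈ U) → v = 0) :
    ∃ S : Finset Γ, ∃ U ∈ nhds (0 : V), ∀ v : V,
      (∀ γ ∈ Submonoid.closure (S : Set Γ), ρ γ v ∈ U) → v = 0 := by
  have hunbounded := isExpansive_iff_forall_ne_zero_not_bddAbove.mp (show IsExpansive ρ from hexp)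
  have hdouble : ∀ v : V, v ≠ 0 → ∃ γ, 2 * ‖v‖ < ‖ρ γ v‖ := fun v hv => by
    simpa using not_bddAbove_iff.mp (hunbounded v hv) (2 * ‖v‖)
  obtain ⟨S, hS⟩ := exists_finset_forall_ne_zero_exists_mem_mul_norm_lt hdouble
  obtain ⟨U, hU, hclosure⟩ :=
    isExpansive_closure_of_forall_ne_zero_exists_mem_mul_norm_lt ρ one_lt_two hS
  exact ⟨S, U, hU, fun v hv => hclosure v fun γ => hv γ γ.2⟩
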